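/- arXiv:1707.08820 — 5 statements merged into one kernel-verified Lean document; each statement's English description precedes it below -/
import Mathlib

section
/- Let α > 1 and β, C, C' > 0, let X_1, …, X_T be i.i.d. (α, β, C, C')-second order Pareto random variables, set B = (2C'T)^(1/((1+β)α)), Q1 = (1/(2C')) · max{(2C'/C)^((1+β)/β), (8C)^(1+β)}, and D_p = Γ(p − 1/α)/α for p ∈ {2, β+1}. Then for T ≥ Q1, | ∫_B^∞ ( P(max_{1≤i≤T} X_i ≤ x) − exp(−T C x^(−α)) ) dx | ≤ 4 D_2 C^(1/α) / T^(1 − 1/α) + 2 C' D_{β+1} / (C^(β+1−1/α) T^(β − 1/α)). -/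
open MeasureTheory ProbabilityTheory Real

/-- A probability distribution `μ` on `ℝ` is `(α, β, C, C')`-second order Pareto if its
cumulative distribution function `F(x) = μ (Iic x)` satisfies
`|1 - C x^(-α) - F(x)| ≤ C' x^(-α(1+β))` for every `x > 0`. -/
def IsSecondOrderPareto (μ : Measure ℝ) (α β C C' : ℝ) : Prop :=
  ∀ x : ℝ, 0 < x → |1 - C * x ^ (-α) - (μ (Set.Iic x)).toReal| ≤ C' * x ^ (-(α * (1 + β)))

/-!
Independence gives `P(max X_i ≤ x) = F(x)^T`. Write `u = C x^(-α)` and `v = C' x^(-α(1+β))`.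
Above the threshold `B` we have `u ≤ 1/8` and `T v ≤ 1/2`, and the second-order condition
gives `F ≤ 1 - u + v ≤ e^(v-u)` and `|F - e^(-u)| ≤ v + u²`. Since
`|a^T - b^T| ≤ T max(a,b)^(T-1) |a - b|`, this yields `|F^T - e^(-Tu)| ≤ 2T e^(-Tu) (v + u²)`.
After the substitution `x ↦ 1/x` the integral of this envelope over `(0, ∞)` is a sum of two
Gamma integrals, which produce `D_(β+1)` and `D_2`.
-/

open Set

theorem rpow_neg_mul_exp_comp_inv {α p s x : ℝ} (hx : 0 < x) :
    x ^ ((-1 : ℝ) - 1) * ((x ^ (-1 : ℝ)) ^ (-(p * α)) * exp (-s * (x ^ (-1 : ℝ)) ^ (-α))) =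
      x ^ (p * α - 2) * exp (-s * x ^ α) := by
  simp only [← rpow_mul hx.le, neg_one_mul, neg_neg]
  rw [← mul_assoc, ← rpow_add hx]
  ring_nf

theorem integrableOn_rpow_neg_mul_exp_neg_mul_rpow_neg {α p s : ℝ} (hα : 0 < α)
    (hp : 1 / α < p) (hs : 0 < s) :
    IntegrableOn (fun x : ℝ ↦ x ^ (-(p * α)) * exp (-s * x ^ (-α))) (Ioi 0) := by
  have hq : -1 < p * α - 2 := by
    have := (div_lt_iff₀ hα).1 hp; linarith
  rw [← integrableOn_Ioi_comp_rpow_iff' _ (by norm_num : (-1 : ℝ) ≠ 0)]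
  exact (integrableOn_rpow_mul_exp_neg_mul_rpow hq hα hs).congr_fun
    (fun x hx ↦ (rpow_neg_mul_exp_comp_inv hx).symm) measurableSet_Ioi

theorem integral_rpow_neg_mul_exp_neg_mul_rpow_neg {α p s : ℝ} (hα : 0 < α)
    (hp : 1 / α < p) (hs : 0 < s) :
    ∫ x in Ioi 0, x ^ (-(p * α)) * exp (-s * x ^ (-α)) =
      Gamma (p - 1 / α) / α * s ^ (-(p - 1 / α)) := by
  have hq : -1 < p * α - 2 := by
    have := (div_lt_iff₀ hα).1 hp; linarith
  rw [← integral_comp_rpow_Ioi _ (by norm_num : (-1 : ℝ) ≠ 0)]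
  simp only [abs_neg, abs_one, one_mul, smul_eq_mul]
  rw [setIntegral_congr_fun measurableSet_Ioi (fun x hx ↦ rpow_neg_mul_exp_comp_inv hx),
    integral_rpow_mul_exp_neg_mul_rpow hα hq hs]
  have : (p * α - 2 + 1) / α = p - 1 / α := by field_simp; ring
  rw [neg_div, this]
  ring

theorem mul_mul_rpow_neg {a b e : ℝ} (ha : 0 < a) (hb : 0 < b) :
    a * (a * b) ^ (-e) = 1 / (b ^ e * a ^ (e - 1)) := by
  rw [rpow_neg (by positivity), mul_rpow ha.le hb.le, rpow_sub_one ha.ne']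
  field_simp

theorem ProbabilityTheory.iIndepFun.measure_iSup_le_eq_pow {Ω ι : Type*} [MeasurableSpace Ω]
    {P : Measure Ω} [Fintype ι] [Nonempty ι] {X : ι → Ω → ℝ} (hmeas : ∀ i, Measurable (X i))
    (hindep : iIndepFun X P) {μ : Measure ℝ} (hmap : ∀ i, P.map (X i) = μ) (x : ℝ) :
    P {ω | ⨆ i, X i ω ≤ x} = μ (Iic x) ^ Fintype.card ι := by
  have hset : {ω | ⨆ i, X i ω ≤ x} = ⋂ i ∈ Finset.univ, X i ⁻¹' Iic x := by
    ext ω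
    simpa using ciSup_le_iff (Set.finite_range (X · ω)).bddAbove
  rw [hset, hindep.measure_inter_preimage_eq_mul _ (fun _ _ ↦ measurableSet_Iic)]
  simp_rw [← Measure.map_apply (hmeas _) measurableSet_Iic, hmap]
  simp

theorem exp_five_eighths_le_two : exp (5 / 8) ≤ 2 := by
  rw [← le_log_iff_exp_le two_pos]
  linarith [log_two_gt_d9]

theorem abs_sub_exp_neg_le {F u v : ℝ} (hu : |u| ≤ 1) (h : |1 - u - F| ≤ v) :
    |F - exp (-u)| ≤ v + u ^ 2 := by
  have hexp : |exp (-u) - 1 - -u| ≤ u ^ 2 := by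
    simpa using abs_exp_sub_one_sub_id_le (x := -u) (by rwa [abs_neg])
  calc |F - exp (-u)| = |-(1 - u - F) - (exp (-u) - 1 - -u)| := by ring_nf
    _ ≤ |1 - u - F| + |exp (-u) - 1 - -u| := by
        rw [← abs_neg (1 - u - F)]; exact abs_sub _ _
    _ ≤ v + u ^ 2 := add_le_add h hexp

theorem abs_pow_sub_exp_neg_mul_le {F u v : ℝ} {n : ℕ} (hF : 0 ≤ F) (hu : 0 ≤ u)
    (hu₈ : u ≤ 1 / 8) (hnv : n * v ≤ 1 / 2) (h : |1 - u - F| ≤ v) :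
    |F ^ n - exp (-(n * u))| ≤ 2 * n * exp (-(n * u)) * (v + u ^ 2) := by
  have hv : 0 ≤ v := (abs_nonneg _).trans h
  have hF_le : F ≤ exp (v - u) := by linarith [(abs_le.1 h).1, add_one_le_exp (v - u)]
  have hmax : max |F| |exp (-u)| ≤ exp (v - u) := by
    rw [abs_of_nonneg hF, abs_of_pos (exp_pos _)]
    exact max_le hF_le (exp_le_exp.2 (by linarith))
  rcases n with _ | m
  · simp
  have hgrowth : exp (v - u) ^ m ≤ 2 * exp (-((m + 1 : ℕ) * u)) := by
    rw [← exp_nat_mul]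
    -- `m (v - u) ≤ (m + 1) v + u - (m + 1) u ≤ 1/2 + 1/8 - (m + 1) u`
    calc exp (m * (v - u)) ≤ exp (5 / 8 + -((m + 1 : ℕ) * u)) := by
          push_cast at hnv ⊢
          exact exp_le_exp.2 (by nlinarith)
      _ ≤ 2 * exp (-((m + 1 : ℕ) * u)) := by
          rw [exp_add]; gcongr; exact exp_five_eighths_le_two
  calc |F ^ (m + 1) - exp (-((m + 1 : ℕ) * u))| = |F ^ (m + 1) - exp (-u) ^ (m + 1)| := by
        rw [← exp_nat_mul]; ring_nf
    _ ≤ |F - exp (-u)| * (m + 1 : ℕ) * max |F| |exp (-u)| ^ m := abs_pow_sub_pow_le ..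
    _ ≤ (v + u ^ 2) * (m + 1 : ℕ) * (2 * exp (-((m + 1 : ℕ) * u))) := by
        gcongr
        · exact abs_sub_exp_neg_le (by rw [abs_of_nonneg hu]; linarith) h
        · exact (pow_le_pow_left₀ (by positivity) hmax m).trans hgrowth
    _ = 2 * (m + 1 : ℕ) * exp (-((m + 1 : ℕ) * u)) * (v + u ^ 2) := by ring

noncomputable def paretoEnvelope (α β C C' : ℝ) (T : ℕ) (x : ℝ) : ℝ :=
  2 * T * exp (-(T * (C * x ^ (-α)))) * (C' * x ^ (-(α * (1 + β))) + (C * x ^ (-α)) ^ 2)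

section Envelope

variable {α β C C' : ℝ} {T : ℕ}

theorem paretoEnvelope_nonneg (hC' : 0 ≤ C') {x : ℝ} (hx : 0 < x) :
    0 ≤ paretoEnvelope α β C C' T x := by
  unfold paretoEnvelope
  positivity

theorem paretoEnvelope_eq {x : ℝ} (hx : 0 < x) :
    paretoEnvelope α β C C' T x =
      2 * T * C' * (x ^ (-((1 + β) * α)) * exp (-(T * C) * x ^ (-α))) +
        2 * T * C ^ 2 * (x ^ (-(2 * α)) * exp (-(T * C) * x ^ (-α))) := by
  have hsq : (x ^ (-α)) ^ 2 = x ^ (-(2 * α)) := by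
    rw [← rpow_two, ← rpow_mul hx.le]
    ring_nf
  rw [paretoEnvelope, mul_pow, hsq, mul_comm α]
  ring_nf

theorem integrableOn_paretoEnvelope (hα : 1 < α) (hβ : 0 < β) (hC : 0 < C) (hT : 0 < T) :
    IntegrableOn (paretoEnvelope α β C C' T) (Ioi 0) := by
  have hs : (0 : ℝ) < T * C := by positivity
  refine IntegrableOn.congr_fun ?_ (fun x hx ↦ (paretoEnvelope_eq hx).symm) measurableSet_Ioi
  refine .add (.const_mul ?_ _) (.const_mul ?_ _) <;>
    refine integrableOn_rpow_neg_mul_exp_neg_mul_rpow_neg (by linarith) ?_ hs <;>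
    linarith [(div_lt_one (by linarith : (0:ℝ) < α)).2 hα]

theorem integral_paretoEnvelope (hα : 1 < α) (hβ : 0 < β) (hC : 0 < C) (hT : 0 < T) :
    ∫ x in Ioi 0, paretoEnvelope α β C C' T x =
      2 * (Gamma (2 - 1 / α) / α) * C ^ (1 / α) / (T : ℝ) ^ (1 - 1 / α) +
        2 * C' * (Gamma (β + 1 - 1 / α) / α) / (C ^ (β + 1 - 1 / α) * (T : ℝ) ^ (β - 1 / α)) := by
  have hα0 : 0 < α := by linarith
  have hα1 : 1 / α < 1 := (div_lt_one hα0).2 hα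
  have hT0 : (0 : ℝ) < T := by exact_mod_cast hT
  have hs : (0 : ℝ) < T * C := by positivity
  have hint₁ := integrableOn_rpow_neg_mul_exp_neg_mul_rpow_neg hα0 (by linarith : 1 / α < 2) hs
  have hint₂ := integrableOn_rpow_neg_mul_exp_neg_mul_rpow_neg hα0 (by linarith : 1 / α < 1 + β) hs
  rw [setIntegral_congr_fun measurableSet_Ioi (fun x hx ↦ paretoEnvelope_eq hx),
    integral_add (hint₂.const_mul _) (hint₁.const_mul _), integral_const_mul, integral_const_mul,
    integral_rpow_neg_mul_exp_neg_mul_rpow_neg hα0 (by linarith) hs,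
    integral_rpow_neg_mul_exp_neg_mul_rpow_neg hα0 (by linarith) hs]
  have h₁ := mul_mul_rpow_neg (e := 1 + β - 1 / α) hT0 hC
  have h₂ := mul_mul_rpow_neg (e := 2 - 1 / α) hT0 hC
  have hC2 : C ^ 2 = C ^ (2 - 1 / α) * C ^ (1 / α) := by
    rw [← rpow_add hC, sub_add_cancel, rpow_two]
  rw [show β + 1 - 1 / α = 1 + β - 1 / α by ring, show β - 1 / α = 1 + β - 1 / α - 1 by ring,
    show (1 : ℝ) - 1 / α = 2 - 1 / α - 1 by ring]
  calc _ = 2 * C ^ 2 * (Gamma (2 - 1 / α) / α) * (T * (T * C) ^ (-(2 - 1 / α))) +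
        2 * C' * (Gamma (1 + β - 1 / α) / α) * (T * (T * C) ^ (-(1 + β - 1 / α))) := by ring
    _ = _ := by
      rw [h₁, h₂, hC2]
      field_simp

theorem IsSecondOrderPareto.abs_cdf_pow_sub_exp_le_paretoEnvelope {μ : Measure ℝ}
    (hpareto : IsSecondOrderPareto μ α β C C') (hα : 0 < α) (hβ : 0 < 1 + β) (hC : 0 < C)
    (hT : (8 * C) ^ (1 + β) ≤ 2 * C' * T) {x : ℝ}
    (hx : (2 * C' * T) ^ (1 / ((1 + β) * α)) < x) :
    |(μ (Iic x)).toReal ^ T - exp (-(T * C * x ^ (-α)))| ≤ paretoEnvelope α β C C' T x := by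
  have hCT : 0 < 2 * C' * T := lt_of_lt_of_le (by positivity) hT
  have hx0 : 0 < x := lt_of_le_of_lt (by positivity) hx
  have hxB : 2 * C' * T < x ^ ((1 + β) * α) :=
    (rpow_inv_lt_iff_of_pos hCT.le hx0.le (by positivity)).1 (by rwa [← one_div])
  have hx8 : 8 * C < x ^ α := by
    refine (rpow_lt_rpow_iff (by positivity) (by positivity) hβ).1 (hT.trans_lt ?_)
    rwa [← rpow_mul hx0.le, mul_comm α]
  have hu : C * x ^ (-α) ≤ 1 / 8 := by
    rw [rpow_neg hx0.le, ← div_eq_mul_inv, div_le_iff₀ (by positivity)]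
    linarith
  have hv : (T : ℝ) * (C' * x ^ (-(α * (1 + β)))) ≤ 1 / 2 := by
    rw [rpow_neg hx0.le, mul_comm α, ← div_eq_mul_inv, ← mul_div_assoc,
      div_le_iff₀ (by positivity)]
    linarith
  rw [paretoEnvelope, mul_assoc]
  exact abs_pow_sub_exp_neg_mul_le ENNReal.toReal_nonneg (by positivity) hu hv (hpareto x hx0)

end Envelope

theorem tail_term_bound_general
    {Ω : Type*} [MeasurableSpace Ω] (P : Measure Ω)
    (α β C C' : ℝ) (hα : 1 < α) (hβ : 0 < β) (hC : 0 < C) (hC' : 0 < C')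
    (T : ℕ) (X : Fin T → Ω → ℝ)
    (hmeas : ∀ i, Measurable (X i))
    (hindep : iIndepFun X P)
    (μ : Measure ℝ) (hmap : ∀ i, P.map (X i) = μ)
    (hpareto : IsSecondOrderPareto μ α β C C')
    (hT : (1 / (2 * C')) * max ((2 * C' / C) ^ ((1 + β) / β)) ((8 * C) ^ (1 + β)) ≤ (T : ℝ)) :
    |∫ x in Set.Ioi ((2 * C' * (T : ℝ)) ^ (1 / ((1 + β) * α))),
        ((P {ω | (⨆ i, X i ω) ≤ x}).toReal - Real.exp (-((T : ℝ) * C * x ^ (-α))))| ≤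
      4 * (Gamma (2 - 1 / α) / α) * C ^ (1 / α) / (T : ℝ) ^ (1 - 1 / α)
      + 2 * C' * (Gamma (β + 1 - 1 / α) / α) /
          (C ^ (β + 1 - 1 / α) * (T : ℝ) ^ (β - 1 / α)) := by
  have hα0 : 0 < α := by linarith
  have hT8 : (8 * C) ^ (1 + β) ≤ 2 * C' * T := by
    rw [div_mul_eq_mul_div, one_mul, div_le_iff₀ (by positivity)] at hT
    linarith [le_max_right ((2 * C' / C) ^ ((1 + β) / β)) ((8 * C) ^ (1 + β))]
  have hT0 : 0 < T := Nat.cast_pos.1 <| pos_of_mul_pos_right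
    ((by positivity : (0 : ℝ) < (8 * C) ^ (1 + β)).trans_le hT8) (by positivity)
  have : Nonempty (Fin T) := ⟨⟨0, hT0⟩⟩
  have hcdf (x : ℝ) : (P {ω | ⨆ i, X i ω ≤ x}).toReal = (μ (Iic x)).toReal ^ T := by
    rw [hindep.measure_iSup_le_eq_pow hmeas hmap, ENNReal.toReal_pow, Fintype.card_fin]
  set B := (2 * C' * (T : ℝ)) ^ (1 / ((1 + β) * α))
  have hB : Ioi B ⊆ Ioi 0 := Ioi_subset_Ioi (by positivity)
  have hint := integrableOn_paretoEnvelope (C' := C') hα hβ hC hT0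
  have hΓ : 0 ≤ Gamma (2 - 1 / α) := Gamma_nonneg_of_nonneg (by linarith [(div_lt_one hα0).2 hα])
  have hpt : ∀ x ∈ Ioi B,
      ‖(μ (Iic x)).toReal ^ T - exp (-(T * C * x ^ (-α)))‖ ≤ paretoEnvelope α β C C' T x :=
    fun x hx ↦ hpareto.abs_cdf_pow_sub_exp_le_paretoEnvelope hα0 (by linarith) hC hT8 hx
  simp_rw [hcdf]
  calc
    _ ≤ ∫ x in Ioi B, paretoEnvelope α β C C' T x :=
      norm_integral_le_of_norm_le (hint.mono_set hB)
        ((ae_restrict_iff' measurableSet_Ioi).2 (ae_of_all _ hpt))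
    _ ≤ ∫ x in Ioi 0, paretoEnvelope α β C C' T x :=
      setIntegral_mono_set hint ((ae_restrict_iff' measurableSet_Ioi).2 <|
        ae_of_all _ fun _ hx ↦ paretoEnvelope_nonneg hC'.le hx) hB.eventuallyLE
    _ = _ := integral_paretoEnvelope hα hβ hC hT0
    _ ≤ _ := by gcongr; norm_num

theorem tail_term_bound
    {Ω : Type*} [MeasurableSpace Ω] (P : Measure Ω) [IsProbabilityMeasure P]
    (α β C C' : ℝ) (hα : 1 < α) (hβ : 0 < β) (hC : 0 < C) (hC' : 0 < C')
    (T : ℕ) (X : Fin T → Ω → ℝ)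
    (hmeas : ∀ i, Measurable (X i))
    (hindep : iIndepFun X P)
    (μ : Measure ℝ) (hmap : ∀ i, P.map (X i) = μ)
    (hpareto : IsSecondOrderPareto μ α β C C')
    (hT : (1 / (2 * C')) * max ((2 * C' / C) ^ ((1 + β) / β)) ((8 * C) ^ (1 + β)) ≤ (T : ℝ)) :
    |∫ x in Set.Ioi ((2 * C' * (T : ℝ)) ^ (1 / ((1 + β) * α))),
        ((P {ω | (⨆ i, X i ω) ≤ x}).toReal - Real.exp (-((T : ℝ) * C * x ^ (-α))))| ≤
      4 * (Gamma (2 - 1 / α) / α) * C ^ (1 / α) / (T : ℝ) ^ (1 - 1 / α)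
      + 2 * C' * (Gamma (β + 1 - 1 / α) / α) /
          (C ^ (β + 1 - 1 / α) * (T : ℝ) ^ (β - 1 / α)) :=
  tail_term_bound_general P α β C C' hα hβ hC hC' T X hmeas hindep μ hmap hpareto hT
end

section
/- Consider K arms where, for each k ∈ {1, …, K}, arm k's reward X_k is a nonnegative random variable with (α_k, β_k, C_k, C')-second order Pareto distribution, with α_k > 1 for all k, and suppose there is a unique index k* with α_{k*} < α_k for all k ≠ k*; write α_(1) < α_(2) for the smallest and second-smallest values among α_1, …, α_K. If u > max( 1, (2C' / min_{1≤k≤K} C_k)^(1 / min_{1≤k≤K} β_k), (3 max_{1≤k≤K} C_k / min_{1≤k≤K} C_k)^(1/(α_(2) − α_(1))) ), then for every k ≠ k*, E[ X_{k*} · 1{X_{k*} > u} ] > E[ X_k · 1{X_k > u} ]; that is, k* is the unique maximizer of k ↦ E[ X_k · 1{X_k > u} ]. -/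
/-!
By the layer-cake formula, `E[X 1{X > u}] = ∫_0^∞ P(X > max t u) dt`. Above the first threshold
the second-order term is at most half the Pareto term, so every tail `P(X_k > t)`, `t ≥ u`, lies
between `C_k t^(-α_k) / 2` and `3 C_k t^(-α_k) / 2`; hence `E[X_k 1{X_k > u}]` lies between `1/2`
and `3/2` times `C_k u^(1-α_k) α_k / (α_k - 1)`. Above the second threshold the factor
`u^(α_k - α_{k*})` beats `3 max C / min C`, so the lower bound for `k*` exceeds the upper bound
for any other `k`.
-/

open MeasureTheory ProbabilityTheory Real

open Set

/-- `∫_0^∞ (max t u)^(-α) dt`, i.e. `E[X 1{X > u}]` for an exact tail `P(X > t) = t^(-α)`. -/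
noncomputable def paretoTruncatedMean (α u : ℝ) : ℝ := u ^ (1 - α) * (α / (α - 1))

theorem paretoTruncatedMean_pos {α u : ℝ} (hα : 1 < α) (hu : 0 < u) :
    0 < paretoTruncatedMean α u :=
  mul_pos (rpow_pos_of_pos hu _) (div_pos (by linarith) (by linarith))

theorem lt_mul_rpow_of_rpow_one_div_lt {a c c' p q u : ℝ} (ha : 0 ≤ a) (hc : 0 < c)
    (hcc' : c ≤ c') (hp : 0 < p) (hpq : p ≤ q) (hu : 1 ≤ u) (h : (a / c) ^ (1 / p) < u) :
    a < c' * u ^ q := by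
  rw [one_div, rpow_inv_lt_iff_of_pos (by positivity) (by linarith) hp, div_lt_iff₀ hc] at h
  calc a < u ^ p * c := h
    _ ≤ u ^ q * c' := mul_le_mul (rpow_le_rpow_of_exponent_le hu hpq) hcc' hc.le (by positivity)
    _ = c' * u ^ q := mul_comm _ _

theorem mul_rpow_neg_le_half_of_le {α β C C' t : ℝ} (ht : 0 < t)
    (h : 2 * C' ≤ C * t ^ (α * β)) : C' * t ^ (-(α * (1 + β))) ≤ C / 2 * t ^ (-α) := by
  have hsplit : t ^ (-(α * (1 + β))) = t ^ (-α) / t ^ (α * β) := by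
    rw [div_eq_mul_inv, ← rpow_neg ht.le, ← rpow_add ht]
    ring_nf
  rw [hsplit, mul_div_assoc', div_le_iff₀ (by positivity)]
  nlinarith [rpow_pos_of_pos ht (-α)]

theorem three_mul_paretoTruncatedMean_lt {α₁ α₂ C₁ C₂ u : ℝ} (hα₁ : 1 < α₁) (hα : α₁ < α₂)
    (hu : 0 < u) (hC₁ : 0 < C₁) (hC : 3 * C₂ < C₁ * u ^ (α₂ - α₁)) :
    3 * C₂ * paretoTruncatedMean α₂ u < C₁ * paretoTruncatedMean α₁ u := by
  have hpos := paretoTruncatedMean_pos (α := α₂) (by linarith) hu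
  unfold paretoTruncatedMean at hpos ⊢
  have hratio : α₂ / (α₂ - 1) ≤ α₁ / (α₁ - 1) := by
    rw [div_le_div_iff₀ (by linarith) (by linarith)]
    nlinarith
  have hpow : u ^ (1 - α₁) = u ^ (α₂ - α₁) * u ^ (1 - α₂) := by
    rw [← rpow_add hu]
    ring_nf
  calc 3 * C₂ * (u ^ (1 - α₂) * (α₂ / (α₂ - 1)))
      < C₁ * u ^ (α₂ - α₁) * (u ^ (1 - α₂) * (α₂ / (α₂ - 1))) := mul_lt_mul_of_pos_right hC hpos
    _ ≤ C₁ * u ^ (α₂ - α₁) * (u ^ (1 - α₂) * (α₁ / (α₁ - 1))) := by gcongr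
    _ = C₁ * (u ^ (1 - α₁) * (α₁ / (α₁ - 1))) := by rw [hpow]; ring

section MaxRpow

variable {α u : ℝ}

theorem integrableOn_max_rpow_neg (hα : 1 < α) (hu : 0 < u) :
    IntegrableOn (fun t : ℝ => max t u ^ (-α)) (Ioi 0) := by
  rw [← Ioc_union_Ioi_eq_Ioi hu.le]
  refine IntegrableOn.union ?_ ?_
  · refine (integrableOn_const (C := u ^ (-α)) measure_Ioc_lt_top.ne).congr_fun (fun t ht => ?_)
      measurableSet_Ioc
    simp [max_eq_right ht.2]
  · refine (integrableOn_Ioi_rpow_of_lt (a := -α) (by linarith) hu).congr_fun (fun t ht => ?_)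
      measurableSet_Ioi
    simp [max_eq_left (le_of_lt (mem_Ioi.mp ht))]

theorem integral_max_rpow_neg (hα : 1 < α) (hu : 0 < u) :
    ∫ t in Ioi 0, max t u ^ (-α) = paretoTruncatedMean α u := by
  have hint := integrableOn_max_rpow_neg hα hu
  rw [← Ioc_union_Ioi_eq_Ioi hu.le] at hint ⊢
  rw [setIntegral_union (Ioc_disjoint_Ioi le_rfl) measurableSet_Ioi
    (hint.mono_set subset_union_left) (hint.mono_set subset_union_right)]
  have hIoc : ∫ t in Ioc 0 u, max t u ^ (-α) = u * u ^ (-α) := by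
    rw [setIntegral_congr_fun measurableSet_Ioc (g := fun _ => u ^ (-α))
      fun t ht => by simp [max_eq_right ht.2]]
    simp [hu.le]
  have hIoi : ∫ t in Ioi u, max t u ^ (-α) = -u ^ (-α + 1) / (-α + 1) := by
    rw [setIntegral_congr_fun measurableSet_Ioi (g := fun t => t ^ (-α))
      fun t ht => by simp [max_eq_left (le_of_lt (mem_Ioi.mp ht))]]
    exact integral_Ioi_rpow_of_lt (by linarith) hu
  have hpow : u ^ (-α + 1) = u * u ^ (-α) := by rw [rpow_add hu, rpow_one, mul_comm]
  rw [hIoc, hIoi, paretoTruncatedMean, show 1 - α = -α + 1 by ring, hpow]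
  have : -α + 1 ≠ 0 := by linarith
  have : α - 1 ≠ 0 := by linarith
  field_simp
  ring

theorem lintegral_ofReal_mul_max_rpow_neg (hα : 1 < α) (hu : 0 < u) {c : ℝ} (hc : 0 ≤ c) :
    ∫⁻ t in Ioi 0, ENNReal.ofReal (c * max t u ^ (-α)) =
      ENNReal.ofReal (c * paretoTruncatedMean α u) := by
  rw [← ofReal_integral_eq_lintegral_ofReal ((integrableOn_max_rpow_neg hα hu).const_mul c)
    (ae_of_all _ fun t => by positivity), integral_const_mul, integral_max_rpow_neg hα hu]

end MaxRpow

section LayerCake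

variable {μ : Measure ℝ} {α u c : ℝ}

theorem lintegral_Ioi_ofReal_eq_lintegral_measure_Ioi_max (μ : Measure ℝ) (hu : 0 ≤ u) :
    ∫⁻ x in Ioi u, ENNReal.ofReal x ∂μ = ∫⁻ t in Ioi 0, μ (Ioi (max t u)) := by
  rw [lintegral_eq_lintegral_meas_lt (f := fun x => x) _
    (ae_restrict_of_forall_mem measurableSet_Ioi fun x hx => hu.trans (le_of_lt hx))
    measurable_id'.aemeasurable]
  refine lintegral_congr fun t => ?_
  change μ.restrict (Ioi u) (Ioi t) = _
  rw [Measure.restrict_apply measurableSet_Ioi, Ioi_inter_Ioi]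

theorem lintegral_Ioi_ofReal_le (hα : 1 < α) (hu : 0 < u) (hc : 0 ≤ c)
    (h : ∀ t, u ≤ t → μ (Ioi t) ≤ ENNReal.ofReal (c * t ^ (-α))) :
    ∫⁻ x in Ioi u, ENNReal.ofReal x ∂μ ≤ ENNReal.ofReal (c * paretoTruncatedMean α u) := by
  rw [lintegral_Ioi_ofReal_eq_lintegral_measure_Ioi_max μ hu.le,
    ← lintegral_ofReal_mul_max_rpow_neg hα hu hc]
  exact lintegral_mono fun t => h _ (le_max_right t u)

theorem ofReal_le_lintegral_Ioi_ofReal (hα : 1 < α) (hu : 0 < u) (hc : 0 ≤ c)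
    (h : ∀ t, u ≤ t → ENNReal.ofReal (c * t ^ (-α)) ≤ μ (Ioi t)) :
    ENNReal.ofReal (c * paretoTruncatedMean α u) ≤ ∫⁻ x in Ioi u, ENNReal.ofReal x ∂μ := by
  rw [lintegral_Ioi_ofReal_eq_lintegral_measure_Ioi_max μ hu.le,
    ← lintegral_ofReal_mul_max_rpow_neg hα hu hc]
  exact lintegral_mono fun t => h _ (le_max_right t u)

end LayerCake

namespace IsSecondOrderPareto

variable {μ : Measure ℝ} [IsProbabilityMeasure μ] {α β C C' : ℝ}

theorem abs_measureReal_Ioi_sub_le (hp : IsSecondOrderPareto μ α β C C') {x : ℝ} (hx : 0 < x) :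
    |μ.real (Ioi x) - C * x ^ (-α)| ≤ C' * x ^ (-(α * (1 + β))) := by
  rw [← compl_Iic, probReal_compl_eq_one_sub measurableSet_Iic, measureReal_def]
  convert hp x hx using 2
  ring

theorem setIntegral_Ioi_id_mem_Icc (hp : IsSecondOrderPareto μ α β C C') (hα : 1 < α)
    (hC : 0 < C) {u : ℝ} (hu : 0 < u)
    (hhalf : ∀ t, u ≤ t → 2 * C' ≤ C * t ^ (α * β)) :
    ∫ x in Ioi u, x ∂μ ∈
      Icc (C / 2 * paretoTruncatedMean α u) (3 / 2 * C * paretoTruncatedMean α u) := by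
  have htail : ∀ t, u ≤ t →
      μ.real (Ioi t) ∈ Icc (C / 2 * t ^ (-α)) (3 / 2 * C * t ^ (-α)) := fun t hut => by
    have ht := hu.trans_le hut
    have := abs_le.mp ((hp.abs_measureReal_Ioi_sub_le ht).trans
      (mul_rpow_neg_le_half_of_le ht (hhalf t hut)))
    constructor <;> linarith [this.1, this.2]
  have hupper := lintegral_Ioi_ofReal_le (μ := μ) (c := 3 / 2 * C) hα hu (by positivity)
    fun t hut => ENNReal.le_ofReal_iff_toReal_le (measure_ne_top _ _)
      (by have := hu.trans_le hut; positivity) |>.2 (htail t hut).2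
  have hlower := ofReal_le_lintegral_Ioi_ofReal (μ := μ) (c := C / 2) hα hu (by positivity)
    fun t hut => ENNReal.ofReal_le_iff_le_toReal (measure_ne_top _ _) |>.2 (htail t hut).1
  rw [integral_eq_lintegral_of_nonneg_ae (f := fun x => x)
    (ae_restrict_of_forall_mem measurableSet_Ioi fun x hx => hu.le.trans (le_of_lt hx))
    measurable_id'.aestronglyMeasurable]
  exact ⟨(ENNReal.ofReal_le_iff_le_toReal (ne_top_of_le_ne_top ENNReal.ofReal_ne_top hupper)).1
    hlower, ENNReal.toReal_le_of_le_ofReal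
    (mul_pos (by positivity) (paretoTruncatedMean_pos hα hu)).le hupper⟩

end IsSecondOrderPareto

theorem truncated_mean_optimal_arm_general
    {Ω : Type*} [MeasurableSpace Ω] (P : Measure Ω) [IsProbabilityMeasure P]
    (K : ℕ) (α β C : Fin K → ℝ) (C' : ℝ)
    (hα : ∀ k, 1 < α k) (hβ : ∀ k, 0 < β k) (hC : ∀ k, 0 < C k) (hC' : 0 < C')
    (kstar : Fin K) (hkstar : ∀ k, k ≠ kstar → α kstar < α k)
    (hne : ((Finset.univ : Finset (Fin K)).erase kstar).Nonempty)
    (X : Fin K → Ω → ℝ)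
    (hmeas : ∀ k, Measurable (X k))
    (hpareto : ∀ k, IsSecondOrderPareto (P.map (X k)) (α k) (β k) (C k) C')
    (u : ℝ)
    (hu : max (max 1
        ((2 * C' / ((Finset.univ : Finset (Fin K)).inf' ⟨kstar, Finset.mem_univ kstar⟩ C))
          ^ (1 / ((Finset.univ : Finset (Fin K)).inf' ⟨kstar, Finset.mem_univ kstar⟩ β))))
        ((3 * ((Finset.univ : Finset (Fin K)).sup' ⟨kstar, Finset.mem_univ kstar⟩ C) /
            ((Finset.univ : Finset (Fin K)).inf' ⟨kstar, Finset.mem_univ kstar⟩ C))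
          ^ (1 / (((Finset.univ : Finset (Fin K)).erase kstar).inf' hne α - α kstar)))
        < u) :
    ∀ k, k ≠ kstar →
      (∫ ω in {ω | u < X k ω}, X k ω ∂P) < ∫ ω in {ω | u < X kstar ω}, X kstar ω ∂P := by
  simp only [max_lt_iff] at hu
  obtain ⟨⟨hu₁, hu_half⟩, hu_gap⟩ := hu
  have hCmin : 0 < Finset.univ.inf' ⟨kstar, Finset.mem_univ kstar⟩ C :=
    (Finset.lt_inf'_iff _).2 fun k _ => hC k
  have hhalf : ∀ k t, u ≤ t → 2 * C' ≤ C k * t ^ (α k * β k) := fun k t hut =>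
    (lt_mul_rpow_of_rpow_one_div_lt (by positivity) hCmin (Finset.inf'_le _ (Finset.mem_univ k))
      ((Finset.lt_inf'_iff _).2 fun j _ => hβ j)
      ((Finset.inf'_le _ (Finset.mem_univ k)).trans (le_mul_of_one_le_left (hβ k).le (hα k).le))
      (by linarith) (hu_half.trans_le hut)).le
  have hbounds : ∀ k, ∫ ω in {ω | u < X k ω}, X k ω ∂P ∈
      Icc (C k / 2 * paretoTruncatedMean (α k) u) (3 / 2 * C k * paretoTruncatedMean (α k) u) := by
    intro k
    have := Measure.isProbabilityMeasure_map (μ := P) (hmeas k).aemeasurable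
    rw [show {ω | u < X k ω} = X k ⁻¹' Ioi u from rfl, ← setIntegral_map (f := fun x => x)
      measurableSet_Ioi measurable_id'.aestronglyMeasurable (hmeas k).aemeasurable]
    exact (hpareto k).setIntegral_Ioi_id_mem_Icc (hα k) (hC k) (by linarith) (hhalf k)
  intro k hk
  have hgap : 3 * C k < C kstar * u ^ (α k - α kstar) := by
    have hCk := Finset.le_sup' C (Finset.mem_univ k)
    have hα₂ : α kstar < (Finset.univ.erase kstar).inf' hne α :=
      (Finset.lt_inf'_iff hne).2 fun j hj => hkstar j (Finset.ne_of_mem_erase hj)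
    have := lt_mul_rpow_of_rpow_one_div_lt (by linarith [hC k]) hCmin
      (Finset.inf'_le _ (Finset.mem_univ kstar)) (sub_pos.2 hα₂)
      (sub_le_sub_right (Finset.inf'_le _ (Finset.mem_erase.2 ⟨hk, Finset.mem_univ k⟩)) _)
      hu₁.le hu_gap
    linarith
  have := three_mul_paretoTruncatedMean_lt (hα kstar) (hkstar k hk) (by linarith) (hC kstar) hgap
  linarith [(hbounds k).2, (hbounds kstar).1]

theorem truncated_mean_optimal_arm
    {Ω : Type*} [MeasurableSpace Ω] (P : Measure Ω) [IsProbabilityMeasure P]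
    (K : ℕ) (α β C : Fin K → ℝ) (C' : ℝ)
    (hα : ∀ k, 1 < α k) (hβ : ∀ k, 0 < β k) (hC : ∀ k, 0 < C k) (hC' : 0 < C')
    (kstar : Fin K) (hkstar : ∀ k, k ≠ kstar → α kstar < α k)
    (hne : ((Finset.univ : Finset (Fin K)).erase kstar).Nonempty)
    (X : Fin K → Ω → ℝ)
    (hmeas : ∀ k, Measurable (X k)) (hnonneg : ∀ k ω, 0 ≤ X k ω)
    (hpareto : ∀ k, IsSecondOrderPareto (P.map (X k)) (α k) (β k) (C k) C')
    (u : ℝ)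
    (hu : max (max 1
        ((2 * C' / ((Finset.univ : Finset (Fin K)).inf' ⟨kstar, Finset.mem_univ kstar⟩ C))
          ^ (1 / ((Finset.univ : Finset (Fin K)).inf' ⟨kstar, Finset.mem_univ kstar⟩ β))))
        ((3 * ((Finset.univ : Finset (Fin K)).sup' ⟨kstar, Finset.mem_univ kstar⟩ C) /
            ((Finset.univ : Finset (Fin K)).inf' ⟨kstar, Finset.mem_univ kstar⟩ C))
          ^ (1 / (((Finset.univ : Finset (Fin K)).erase kstar).inf' hne α - α kstar)))
        < u) :
    ∀ k, k ≠ kstar →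
      (∫ ω in {ω | u < X k ω}, X k ω ∂P) < ∫ ω in {ω | u < X kstar ω}, X kstar ω ∂P :=
  truncated_mean_optimal_arm_general P K α β C C' hα hβ hC hC' kstar hkstar hne X hmeas hpareto u hu
end

section
/- Let α > 1, β, C, C' > 0 with α(1+β) > 1, and let X be a nonnegative random variable with (α, β, C, C')-second order Pareto distribution. Then for every u > 0, M − Δ ≤ E[ X · 1{X > u} ] ≤ M + Δ, where M = (C α / (α − 1)) u^(−α+1) and Δ = (C' α(1+β) / (α(1+β) − 1)) u^(−α(1+β)+1). -/
/-!
By the layer cake formula, `E[X 1{X > u}] = u P(X > u) + ∫_u^∞ P(X > t) dt`. For a tail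
`C t^(-a)` with `a > 1` the right-hand side equals `C a / (a - 1) u^(1 - a)`, and the
second-order error, bounded by `C' t^(-γ)` with `γ = α(1 + β) > 1`, contributes in the same
way at most `C' γ / (γ - 1) u^(1 - γ)`.
-/

open MeasureTheory ProbabilityTheory Real

open Set

theorem IsSecondOrderPareto.abs_measureReal_Ioi_sub_le_s12 {μ : Measure ℝ} [IsProbabilityMeasure μ]
    {α β C C' : ℝ} (h : IsSecondOrderPareto μ α β C C') {x : ℝ} (hx : 0 < x) :
    |μ.real (Ioi x) - C * x ^ (-α)| ≤ C' * x ^ (-(α * (1 + β))) := by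
  rw [← compl_Iic, probReal_compl_eq_one_sub measurableSet_Iic]
  convert h x hx using 2
  rw [measureReal_def]
  ring

section LayerCake

variable {Ω : Type*} [MeasurableSpace Ω] (P : Measure Ω) {X : Ω → ℝ} {u : ℝ}

theorem lintegral_gt_eq_mul_add_lintegral_Ioi (hX : Measurable X) (hu : 0 ≤ u) :
    ∫⁻ ω in {ω | u < X ω}, ENNReal.ofReal (X ω) ∂P
      = ENNReal.ofReal u * P {ω | u < X ω} + ∫⁻ t in Ioi u, P {ω | t < X ω} := by
  have hS : MeasurableSet {ω | u < X ω} := measurableSet_lt measurable_const hX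
  set Y := {ω | u < X ω}.indicator X
  have hY_nonneg : 0 ≤ Y := fun ω ↦ indicator_nonneg (fun ω hω ↦ hu.trans hω.le) ω
  have hlevel : ∀ t, 0 < t → {ω | t < Y ω} = {ω | max t u < X ω} := by
    intro t ht
    ext ω
    by_cases hω : u < X ω <;> simp [Y, hω, ht.not_gt]
  have hY : ∫⁻ ω in {ω | u < X ω}, ENNReal.ofReal (X ω) ∂P
      = ∫⁻ ω, ENNReal.ofReal (Y ω) ∂P := by
    rw [← lintegral_indicator hS]
    refine lintegral_congr fun ω ↦ ?_
    by_cases hω : u < X ω <;> simp [Y, hω]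
  rw [hY, lintegral_eq_lintegral_meas_lt P (ae_of_all _ hY_nonneg)
      (hX.indicator hS).aemeasurable,
    setLIntegral_congr_fun measurableSet_Ioi fun t ht ↦ congrArg P (hlevel t ht),
    ← Ioc_union_Ioi_eq_Ioi hu, lintegral_union measurableSet_Ioi Ioc_disjoint_Ioi_same]
  congr 1
  · rw [setLIntegral_congr_fun measurableSet_Ioc fun t ht ↦ by rw [max_eq_right ht.2],
      setLIntegral_const, Real.volume_Ioc, sub_zero, mul_comm]
  · exact setLIntegral_congr_fun measurableSet_Ioi fun t ht ↦ by rw [max_eq_left ht.le]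

theorem setIntegral_gt_eq_mul_add_integral_Ioi [IsFiniteMeasure P] (hX : Measurable X)
    (hu : 0 ≤ u) (hint : IntegrableOn (fun t ↦ P.real {ω | t < X ω}) (Ioi u)) :
    ∫ ω in {ω | u < X ω}, X ω ∂P
      = u * P.real {ω | u < X ω} + ∫ t in Ioi u, P.real {ω | t < X ω} := by
  have hX_nonneg : 0 ≤ᵐ[P.restrict {ω | u < X ω}] X := by
    filter_upwards [ae_restrict_mem (measurableSet_lt measurable_const hX)] with ω hω
    exact hu.trans hω.le
  have hI_nonneg : 0 ≤ ∫ t in Ioi u, P.real {ω | t < X ω} :=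
    setIntegral_nonneg measurableSet_Ioi fun _ _ ↦ measureReal_nonneg
  rw [integral_eq_lintegral_of_nonneg_ae hX_nonneg hX.aestronglyMeasurable,
    lintegral_gt_eq_mul_add_lintegral_Ioi P hX hu, ← ofReal_measureReal,
    ← ENNReal.ofReal_mul hu]
  have htail : ∫⁻ t in Ioi u, P {ω | t < X ω}
      = ENNReal.ofReal (∫ t in Ioi u, P.real {ω | t < X ω}) := by
    rw [ofReal_integral_eq_lintegral_ofReal hint (ae_of_all _ fun _ ↦ measureReal_nonneg)]
    exact lintegral_congr fun t ↦ (ofReal_measureReal).symm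
  rw [htail, ← ENNReal.ofReal_add (by positivity) hI_nonneg,
    ENNReal.toReal_ofReal (by positivity)]

end LayerCake

section RpowTail

variable {f : ℝ → ℝ} {a b c c' u : ℝ}

theorem mul_rpow_add_integral_Ioi_rpow (ha : 1 < a) (hu : 0 < u) :
    u * u ^ (-a) + (∫ t in Ioi u, t ^ (-a)) = a / (a - 1) * u ^ (-a + 1) := by
  have : a - 1 ≠ 0 := by linarith
  have : -a + 1 ≠ 0 := by linarith
  rw [integral_Ioi_rpow_of_lt (by linarith) hu, rpow_add_one hu.ne']
  field_simp
  ring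

theorem integrableOn_Ioi_of_abs_sub_rpow_le (ha : 1 < a) (hb : 1 < b) (hu : 0 < u)
    (hf : AEStronglyMeasurable f (volume.restrict (Ioi u)))
    (hbound : ∀ t, u ≤ t → |f t - c * t ^ (-a)| ≤ c' * t ^ (-b)) :
    IntegrableOn f (Ioi u) := by
  have hmain : IntegrableOn (fun t ↦ c * t ^ (-a)) (Ioi u) :=
    (integrableOn_Ioi_rpow_of_lt (neg_lt_neg ha) hu).const_mul c
  have herr : IntegrableOn (fun t ↦ f t - c * t ^ (-a)) (Ioi u) := by
    refine ((integrableOn_Ioi_rpow_of_lt (neg_lt_neg hb) hu).const_mul c').mono'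
      (hf.sub hmain.aestronglyMeasurable) ?_
    filter_upwards [ae_restrict_mem measurableSet_Ioi] with t ht
    exact hbound t ht.le
  exact (herr.add hmain).congr_fun (fun t _ ↦ sub_add_cancel (f t) _) measurableSet_Ioi

theorem abs_mul_add_integral_Ioi_sub_le (ha : 1 < a) (hb : 1 < b) (hu : 0 < u)
    (hf : IntegrableOn f (Ioi u))
    (hbound : ∀ t, u ≤ t → |f t - c * t ^ (-a)| ≤ c' * t ^ (-b)) :
    |u * f u + (∫ t in Ioi u, f t) - c * a / (a - 1) * u ^ (-a + 1)|
      ≤ c' * b / (b - 1) * u ^ (-b + 1) := by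
  have hmain : IntegrableOn (fun t ↦ c * t ^ (-a)) (Ioi u) :=
    (integrableOn_Ioi_rpow_of_lt (neg_lt_neg ha) hu).const_mul c
  have herr : IntegrableOn (fun t ↦ c' * t ^ (-b)) (Ioi u) :=
    (integrableOn_Ioi_rpow_of_lt (neg_lt_neg hb) hu).const_mul c'
  have hsplit : u * f u + (∫ t in Ioi u, f t) - c * a / (a - 1) * u ^ (-a + 1)
      = u * (f u - c * u ^ (-a)) + ∫ t in Ioi u, (f t - c * t ^ (-a)) := by
    rw [integral_sub hf hmain, integral_const_mul]
    linear_combination c * mul_rpow_add_integral_Ioi_rpow ha hu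
  have hint : |∫ t in Ioi u, (f t - c * t ^ (-a))| ≤ ∫ t in Ioi u, c' * t ^ (-b) := by
    refine (norm_eq_abs _).symm.trans_le (norm_integral_le_of_norm_le herr ?_)
    filter_upwards [ae_restrict_mem measurableSet_Ioi] with t ht
    exact hbound t ht.le
  calc |u * f u + (∫ t in Ioi u, f t) - c * a / (a - 1) * u ^ (-a + 1)|
      ≤ |u * (f u - c * u ^ (-a))| + |∫ t in Ioi u, (f t - c * t ^ (-a))| :=
        hsplit ▸ abs_add_le _ _
    _ ≤ u * (c' * u ^ (-b)) + ∫ t in Ioi u, c' * t ^ (-b) := by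
        rw [abs_mul, abs_of_pos hu]
        gcongr
        exact hbound u le_rfl
    _ = c' * b / (b - 1) * u ^ (-b + 1) := by
        rw [integral_const_mul]
        linear_combination c' * mul_rpow_add_integral_Ioi_rpow hb hu

end RpowTail

theorem truncated_mean_bounds_general
    {Ω : Type*} [MeasurableSpace Ω] (P : Measure Ω) [IsProbabilityMeasure P]
    (α β C C' : ℝ) (hα : 1 < α)
    (hαβ : 1 < α * (1 + β))
    (X : Ω → ℝ) (hmeas : Measurable X)
    (hpareto : IsSecondOrderPareto (P.map X) α β C C')
    (u : ℝ) (hu : 0 < u) :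
    C * α / (α - 1) * u ^ (-α + 1)
        - C' * (α * (1 + β)) / (α * (1 + β) - 1) * u ^ (-(α * (1 + β)) + 1)
      ≤ (∫ ω in {ω | u < X ω}, X ω ∂P) ∧
    (∫ ω in {ω | u < X ω}, X ω ∂P)
      ≤ C * α / (α - 1) * u ^ (-α + 1)
        + C' * (α * (1 + β)) / (α * (1 + β) - 1) * u ^ (-(α * (1 + β)) + 1) := by
  have := Measure.isProbabilityMeasure_map (μ := P) hmeas.aemeasurable
  have htail : ∀ t, u ≤ t → |P.real {ω | t < X ω} - C * t ^ (-α)|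
      ≤ C' * t ^ (-(α * (1 + β))) := fun t ht ↦ by
    have h := hpareto.abs_measureReal_Ioi_sub_le_s12 (hu.trans_le ht)
    rwa [map_measureReal_apply hmeas measurableSet_Ioi] at h
  have htail_anti : Antitone fun t ↦ P.real {ω | t < X ω} :=
    fun s t hst ↦ measureReal_mono fun ω hω ↦ hst.trans_lt hω
  have hint := integrableOn_Ioi_of_abs_sub_rpow_le hα hαβ hu
    htail_anti.measurable.aestronglyMeasurable htail
  obtain ⟨hlower, hupper⟩ := abs_le.mp (abs_mul_add_integral_Ioi_sub_le hα hαβ hu hint htail)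
  rw [setIntegral_gt_eq_mul_add_integral_Ioi P hmeas hu.le hint]
  exact ⟨by linarith, by linarith⟩

theorem truncated_mean_bounds
    {Ω : Type*} [MeasurableSpace Ω] (P : Measure Ω) [IsProbabilityMeasure P]
    (α β C C' : ℝ) (hα : 1 < α) (hβ : 0 < β) (hC : 0 < C) (hC' : 0 < C')
    (hαβ : 1 < α * (1 + β))
    (X : Ω → ℝ) (hmeas : Measurable X) (hnonneg : ∀ ω, 0 ≤ X ω)
    (hpareto : IsSecondOrderPareto (P.map X) α β C C')
    (u : ℝ) (hu : 0 < u) :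
    C * α / (α - 1) * u ^ (-α + 1)
        - C' * (α * (1 + β)) / (α * (1 + β) - 1) * u ^ (-(α * (1 + β)) + 1)
      ≤ (∫ ω in {ω | u < X ω}, X ω ∂P) ∧
    (∫ ω in {ω | u < X ω}, X ω ∂P)
      ≤ C * α / (α - 1) * u ^ (-α + 1)
        + C' * (α * (1 + β)) / (α * (1 + β) - 1) * u ^ (-(α * (1 + β)) + 1) :=
  truncated_mean_bounds_general P α β C C' hα hαβ X hmeas hpareto u hu
end

section
/- Consider K arms where, for each k ∈ {1, …, K}, the samples (X_{k,i})_i are i.i.d. with (α_k, β_k, C_k, C')-second order Pareto distribution, all samples across arms being mutually independent, and let k* be an index with α_{k*} < α_k for all k ≠ k*. Let δ ∈ (0,1), let M and N be positive integers, and set ℓ = (M C_{k*} / (2 log(1/δ)))^(1/α_{k*}) and, for each k ≠ k*, L_k = (4 N C_k / log(1/(1−δ)))^(1/α_k). Assume C_{k*} ℓ^(−α_{k*}) ≥ 2 C' ℓ^(−α_{k*}(1+β_{k*})), and for each k ≠ k*: C_k L_k^(−α_k) ≥ C' L_k^(−α_k(1+β_k)), L_k^(−α_k) ≤ 1/(4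 C_k), and L_k ≤ ℓ. Then P( max_{k ≠ k*} max_{1≤i≤N} X_{k,i} ≤ max_{1≤i≤M} X_{k*,i} ) ≥ 1 − K δ. -/
/-!
On the event that some sample of the best arm exceeds `ℓ` while every sample of every other
arm `k` stays below `L k ≤ ℓ`, the maximum of the best arm dominates, so it suffices to bound
each of the `K` complementary events by `δ`. By independence their probabilities are powers of
the cumulative distribution functions, `F(ℓ)^M` and `1 - F(L k)^N`, and the second order
conditions at `ℓ` and `L k` pin `F` down to `1 - Θ(x^(-α))`; the choices of `ℓ` and `L k` are
made so that `(1 - c)^M ≤ exp(-M c) = δ` and `(1 - x)^N ≥ exp(-2 N x) = 1 - δ`.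
-/

open MeasureTheory ProbabilityTheory Real Set

lemma exp_neg_two_mul_le_one_sub {x : ℝ} (hx₀ : 0 ≤ x) (hx : x ≤ 1 / 2) :
    exp (-(2 * x)) ≤ 1 - x :=
  calc exp (-(2 * x)) = (exp (2 * x))⁻¹ := exp_neg _
    _ ≤ (1 + 2 * x)⁻¹ := inv_anti₀ (by positivity) (by linarith [add_one_le_exp (2 * x)])
    _ ≤ 1 - x := by
      rw [inv_le_iff_one_le_mul₀ (by positivity)]
      nlinarith

lemma pow_le_exp_neg_mul_of_le_one_sub {F c : ℝ} (n : ℕ) (hF₀ : 0 ≤ F) (hF : F ≤ 1 - c) :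
    F ^ n ≤ exp (-(n * c)) :=
  calc F ^ n ≤ exp (-c) ^ n := pow_le_pow_left₀ hF₀ (hF.trans (one_sub_le_exp_neg c)) n
    _ = exp (-(n * c)) := by rw [← exp_nat_mul, mul_neg]

lemma exp_neg_two_mul_le_pow_of_one_sub_le {F x : ℝ} (n : ℕ) (hx₀ : 0 ≤ x) (hx : x ≤ 1 / 2)
    (hF : 1 - x ≤ F) : exp (-(2 * n * x)) ≤ F ^ n :=
  calc exp (-(2 * n * x)) = exp (-(2 * x)) ^ n := by rw [← exp_nat_mul]; ring_nf
    _ ≤ F ^ n := pow_le_pow_left₀ (exp_pos _).le ((exp_neg_two_mul_le_one_sub hx₀ hx).trans hF) n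

lemma exp_neg_log_one_div {y : ℝ} (hy : 0 < y) : exp (-log (1 / y)) = y := by
  rw [one_div, log_inv, neg_neg, exp_log hy]

lemma rpow_one_div_rpow_neg {a α : ℝ} (ha : 0 ≤ a) (hα : α ≠ 0) :
    (a ^ (1 / α)) ^ (-α) = a⁻¹ := by
  rw [rpow_neg (rpow_nonneg ha _), one_div, rpow_inv_rpow ha hα]

lemma iSup_iSup_le_iSup_of_le_of_lt {ι ι' : Type*} {κ : ι → Type*} [Finite ι']
    {Z : (k : ι) → κ k → ℝ} {Y : ι' → ℝ} {ℓ : ℝ} (hℓ : 0 ≤ ℓ) (hZ : ∀ k i, Z k i ≤ ℓ)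
    (hY : ∃ i, ℓ < Y i) : ⨆ k, ⨆ i, Z k i ≤ ⨆ i, Y i := by
  obtain ⟨i₀, hi₀⟩ := hY
  calc ⨆ k, ⨆ i, Z k i ≤ ℓ := Real.iSup_le (fun k => Real.iSup_le (hZ k) hℓ) hℓ
    _ ≤ ⨆ i, Y i := hi₀.le.trans (le_ciSup (Finite.bddAbove_range Y) i₀)

lemma ProbabilityTheory.iIndepFun.measureReal_iInter_preimage_eq_pow {Ω ι : Type*}
    [MeasurableSpace Ω] {P : Measure Ω} [Fintype ι] {X : ι → Ω → ℝ} (hX : iIndepFun X P)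
    (hmeas : ∀ i, Measurable (X i)) {μ : Measure ℝ} (hmap : ∀ i, P.map (X i) = μ)
    {s : Set ℝ} (hs : MeasurableSet s) :
    P.real (⋂ i, X i ⁻¹' s) = μ.real s ^ Fintype.card ι := by
  have h := hX.measure_inter_preimage_eq_mul Finset.univ (sets := fun _ => s) (fun _ _ => hs)
  simp only [Finset.mem_univ, iInter_true] at h
  rw [measureReal_def, h, ENNReal.toReal_prod, Finset.prod_congr rfl fun i _ => by
    rw [← Measure.map_apply (hmeas i) hs, hmap i], Finset.prod_const, Finset.card_univ,
    measureReal_def]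

lemma one_sub_card_mul_le_measureReal_compl_iUnion {Ω ι : Type*} [MeasurableSpace Ω]
    {P : Measure Ω} [IsProbabilityMeasure P] [Fintype ι] {s : ι → Set Ω} {δ : ℝ}
    (hs : ∀ i, P.real (s i) ≤ δ) :
    1 - Fintype.card ι * δ ≤ P.real (⋃ i, s i)ᶜ := by
  have hunion : P.real (⋃ i, s i) ≤ Fintype.card ι * δ :=
    calc P.real (⋃ i, s i) ≤ ∑ i, P.real (s i) := measureReal_iUnion_fintype_le s
      _ ≤ ∑ _i : ι, δ := Finset.sum_le_sum fun i _ => hs i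
      _ = Fintype.card ι * δ := by simp
  have hcover := measureReal_union_le (μ := P) (⋃ i, s i) (⋃ i, s i)ᶜ
  rw [union_compl_self, probReal_univ] at hcover
  linarith

namespace IsSecondOrderPareto

variable {μ : Measure ℝ} {α β C C' x : ℝ}

lemma cdf_le_one_sub (hμ : IsSecondOrderPareto μ α β C C') (hx : 0 < x)
    (hcond : 2 * C' * x ^ (-(α * (1 + β))) ≤ C * x ^ (-α)) :
    μ.real (Iic x) ≤ 1 - C / 2 * x ^ (-α) := by
  have h := (abs_le.mp (hμ x hx)).1
  rw [measureReal_def]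
  linarith

lemma one_sub_le_cdf (hμ : IsSecondOrderPareto μ α β C C') (hx : 0 < x)
    (hcond : C' * x ^ (-(α * (1 + β))) ≤ C * x ^ (-α)) :
    1 - 2 * C * x ^ (-α) ≤ μ.real (Iic x) := by
  have h := (abs_le.mp (hμ x hx)).2
  rw [measureReal_def]
  linarith

lemma cdf_pow_le (hμ : IsSecondOrderPareto μ α β C C') (hα : α ≠ 0) (hC : 0 < C)
    {M : ℕ} (hM : 0 < M) {δ : ℝ} (hδ : δ ∈ Ioo (0 : ℝ) 1)
    {ℓ : ℝ} (hℓ : ℓ = ((M : ℝ) * C / (2 * log (1 / δ))) ^ (1 / α))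
    (hcond : 2 * C' * ℓ ^ (-(α * (1 + β))) ≤ C * ℓ ^ (-α)) :
    μ.real (Iic ℓ) ^ M ≤ δ := by
  have hlog : 0 < log (1 / δ) := log_pos (one_lt_one_div hδ.1 hδ.2)
  have ha : 0 < (M : ℝ) * C / (2 * log (1 / δ)) := by positivity
  have hℓpos : 0 < ℓ := hℓ ▸ rpow_pos_of_pos ha _
  have hexponent : (M : ℝ) * (C / 2 * ℓ ^ (-α)) = log (1 / δ) := by
    rw [hℓ, rpow_one_div_rpow_neg ha.le hα]
    field_simp
  calc μ.real (Iic ℓ) ^ M ≤ exp (-((M : ℝ) * (C / 2 * ℓ ^ (-α)))) :=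
        pow_le_exp_neg_mul_of_le_one_sub M measureReal_nonneg (hμ.cdf_le_one_sub hℓpos hcond)
    _ = δ := by rw [hexponent, exp_neg_log_one_div hδ.1]

lemma one_sub_le_cdf_pow (hμ : IsSecondOrderPareto μ α β C C') (hα : α ≠ 0) (hC : 0 < C)
    {N : ℕ} (hN : 0 < N) {δ : ℝ} (hδ : δ ∈ Ioo (0 : ℝ) 1)
    {L : ℝ} (hL : L = (4 * (N : ℝ) * C / log (1 / (1 - δ))) ^ (1 / α))
    (hcond₁ : C' * L ^ (-(α * (1 + β))) ≤ C * L ^ (-α)) (hcond₂ : L ^ (-α) ≤ 1 / (4 * C)) :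
    1 - δ ≤ μ.real (Iic L) ^ N := by
  have hδ' : 0 < 1 - δ := by linarith [hδ.2]
  have hlog : 0 < log (1 / (1 - δ)) := log_pos (one_lt_one_div hδ' (by linarith [hδ.1]))
  have ha : 0 < 4 * (N : ℝ) * C / log (1 / (1 - δ)) := by positivity
  have hLpos : 0 < L := hL ▸ rpow_pos_of_pos ha _
  have hx₀ : 0 ≤ 2 * C * L ^ (-α) := by positivity
  have hx : 2 * C * L ^ (-α) ≤ 1 / 2 := by
    rw [le_div_iff₀ (by positivity)] at hcond₂
    linarith
  have hexponent : 2 * (N : ℝ) * (2 * C * L ^ (-α)) = log (1 / (1 - δ)) := by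
    rw [hL, rpow_one_div_rpow_neg ha.le hα]
    field_simp
    ring
  calc 1 - δ = exp (-(2 * (N : ℝ) * (2 * C * L ^ (-α)))) := by
        rw [hexponent, exp_neg_log_one_div hδ']
    _ ≤ μ.real (Iic L) ^ N :=
        exp_neg_two_mul_le_pow_of_one_sub_le N hx₀ hx (hμ.one_sub_le_cdf hLpos hcond₁)

end IsSecondOrderPareto

theorem best_arm_max_dominates_general
    {Ω : Type*} [MeasurableSpace Ω] (P : Measure Ω) [IsProbabilityMeasure P]
    (K : ℕ) (α β C : Fin K → ℝ) (C' : ℝ)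
    (hα : ∀ k, 0 < α k) (hC : ∀ k, 0 < C k)
    (kstar : Fin K)
    (M N : ℕ) (hM : 0 < M) (hN : 0 < N)
    -- arm `kstar` gets `M` samples, every other arm gets `N` samples
    (n : Fin K → ℕ) (hn : ∀ k, n k = if k = kstar then M else N)
    (X : (k : Fin K) → Fin (n k) → Ω → ℝ)
    (hmeas : ∀ k i, Measurable (X k i))
    -- all samples across all arms are mutually independent
    (hindep : iIndepFun
      (fun p : Σ k : Fin K, Fin (n k) => X p.1 p.2) P)
    -- within each arm, the samples are identically distributed, second order Pareto
    (hiid : ∀ k, ∃ μ : Measure ℝ,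
      IsSecondOrderPareto μ (α k) (β k) (C k) C' ∧ ∀ i, P.map (X k i) = μ)
    (δ : ℝ) (hδ : δ ∈ Set.Ioo (0 : ℝ) 1)
    (ℓ : ℝ) (hℓ : ℓ = ((M : ℝ) * C kstar / (2 * Real.log (1 / δ))) ^ (1 / α kstar))
    (L : Fin K → ℝ)
    (hL : ∀ k, k ≠ kstar →
      L k = (4 * (N : ℝ) * C k / Real.log (1 / (1 - δ))) ^ (1 / α k))
    (hcondℓ : 2 * C' * ℓ ^ (-(α kstar * (1 + β kstar))) ≤ C kstar * ℓ ^ (-(α kstar)))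
    (hcondL₁ : ∀ k, k ≠ kstar → C' * L k ^ (-(α k * (1 + β k))) ≤ C k * L k ^ (-(α k)))
    (hcondL₂ : ∀ k, k ≠ kstar → L k ^ (-(α k)) ≤ 1 / (4 * C k))
    (hcondLℓ : ∀ k, k ≠ kstar → L k ≤ ℓ) :
    1 - (K : ℝ) * δ ≤
      (P {ω | (⨆ k : {k : Fin K // k ≠ kstar}, ⨆ i : Fin (n k.1), X k.1 i ω)
          ≤ ⨆ i : Fin (n kstar), X kstar i ω}).toReal := by
  choose μ hμ hmap using hiid
  have hmax : ∀ k t, P.real (⋂ i, X k i ⁻¹' Iic t) = (μ k).real (Iic t) ^ n k := fun k t => by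
    simpa using (hindep.precomp sigma_mk_injective).measureReal_iInter_preimage_eq_pow
      (hmeas k) (hmap k) measurableSet_Iic
  let bad : Fin K → Set Ω := fun k =>
    if k = kstar then ⋂ i, X k i ⁻¹' Iic ℓ else (⋂ i, X k i ⁻¹' Iic (L k))ᶜ
  have hbad : ∀ k, P.real (bad k) ≤ δ := by
    intro k
    by_cases hk : k = kstar
    · subst hk
      simpa [bad, hmax, hn] using (hμ k).cdf_pow_le (hα k).ne' (hC k) hM hδ hℓ hcondℓ
    · have hle := (hμ k).one_sub_le_cdf_pow (hα k).ne' (hC k) hN hδ (hL k hk)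
        (hcondL₁ k hk) (hcondL₂ k hk)
      simp only [bad, if_neg hk]
      rw [probReal_compl_eq_one_sub (.iInter fun i => hmeas k i measurableSet_Iic), hmax, hn,
        if_neg hk]
      linarith
  have hℓ₀ : 0 ≤ ℓ := hℓ ▸ rpow_nonneg (div_nonneg (mul_nonneg M.cast_nonneg (hC kstar).le)
    (mul_nonneg zero_le_two (log_nonneg (one_le_one_div hδ.1 hδ.2.le)))) _
  have hgood : (⋃ k, bad k)ᶜ ⊆ {ω | (⨆ k : {k : Fin K // k ≠ kstar}, ⨆ i : Fin (n k.1), X k.1 i ω)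
      ≤ ⨆ i : Fin (n kstar), X kstar i ω} := by
    intro ω hω
    simp only [bad, compl_iUnion, mem_iInter] at hω
    refine iSup_iSup_le_iSup_of_le_of_lt hℓ₀ (fun k i => ?_) (by simpa using hω kstar)
    have hk := hω k.1
    simp only [if_neg k.2, mem_compl_iff, not_not, mem_iInter, mem_preimage, mem_Iic] at hk
    exact (hk i).trans (hcondLℓ k.1 k.2)
  calc 1 - (K : ℝ) * δ ≤ P.real (⋃ k, bad k)ᶜ := by
        simpa using one_sub_card_mul_le_measureReal_compl_iUnion hbad
    _ ≤ _ := measureReal_mono hgood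

theorem best_arm_max_dominates
    {Ω : Type*} [MeasurableSpace Ω] (P : Measure Ω) [IsProbabilityMeasure P]
    (K : ℕ) (α β C : Fin K → ℝ) (C' : ℝ)
    (hα : ∀ k, 0 < α k) (hβ : ∀ k, 0 < β k) (hC : ∀ k, 0 < C k) (hC' : 0 < C')
    (kstar : Fin K) (hkstar : ∀ k, k ≠ kstar → α kstar < α k)
    (M N : ℕ) (hM : 0 < M) (hN : 0 < N)
    -- arm `kstar` gets `M` samples, every other arm gets `N` samples
    (n : Fin K → ℕ) (hn : ∀ k, n k = if k = kstar then M else N)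
    (X : (k : Fin K) → Fin (n k) → Ω → ℝ)
    (hmeas : ∀ k i, Measurable (X k i))
    -- all samples across all arms are mutually independent
    (hindep : iIndepFun
      (fun p : Σ k : Fin K, Fin (n k) => X p.1 p.2) P)
    -- within each arm, the samples are identically distributed, second order Pareto
    (hiid : ∀ k, ∃ μ : Measure ℝ,
      IsSecondOrderPareto μ (α k) (β k) (C k) C' ∧ ∀ i, P.map (X k i) = μ)
    (δ : ℝ) (hδ : δ ∈ Set.Ioo (0 : ℝ) 1)
    (ℓ : ℝ) (hℓ : ℓ = ((M : ℝ) * C kstar / (2 * Real.log (1 / δ))) ^ (1 / α kstar))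
    (L : Fin K → ℝ)
    (hL : ∀ k, k ≠ kstar →
      L k = (4 * (N : ℝ) * C k / Real.log (1 / (1 - δ))) ^ (1 / α k))
    (hcondℓ : 2 * C' * ℓ ^ (-(α kstar * (1 + β kstar))) ≤ C kstar * ℓ ^ (-(α kstar)))
    (hcondL₁ : ∀ k, k ≠ kstar → C' * L k ^ (-(α k * (1 + β k))) ≤ C k * L k ^ (-(α k)))
    (hcondL₂ : ∀ k, k ≠ kstar → L k ^ (-(α k)) ≤ 1 / (4 * C k))
    (hcondLℓ : ∀ k, k ≠ kstar → L k ≤ ℓ) :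
    1 - (K : ℝ) * δ ≤
      (P {ω | (⨆ k : {k : Fin K // k ≠ kstar}, ⨆ i : Fin (n k.1), X k.1 i ω)
          ≤ ⨆ i : Fin (n kstar), X kstar i ω}).toReal :=
  best_arm_max_dominates_general P K α β C C' hα hC kstar M N hM hN n hn X hmeas hindep hiid δ hδ ℓ
    hℓ L hL hcondℓ hcondL₁ hcondL₂ hcondLℓ
end

section
/- Let α > 1, let A > 0, let δ ∈ (0, 1/4], and set x_− = ( A / log(1/(1−2δ)) )^(1/α). Then ∫_{x_−}^∞ ( 1 − exp(−A x^(−α)) ) dx ≤ (8/(α−1)) A^(1/α) δ^(1 − 1/α). -/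
open MeasureTheory Real

/-! Since `1 - exp (-t) ≤ t`, the integrand is dominated by the power tail `A x ^ (-α)`, whose
integral over `(c, ∞)` is `A c ^ (1 - α) / (α - 1)`. At `c = x₋` this equals
`A ^ (1/α) L ^ (1 - 1/α) / (α - 1)` with `L = log (1 / (1 - 2δ)) ≤ 4δ`. -/

lemma one_sub_exp_neg_le_self (t : ℝ) : 1 - exp (-t) ≤ t := by
  linarith [one_sub_le_exp_neg t]

lemma log_one_div_one_sub_le_two_mul {t : ℝ} (ht0 : 0 ≤ t) (ht : t ≤ 1 / 2) :
    log (1 / (1 - t)) ≤ 2 * t := by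
  have hpos : 0 < 1 - t := by linarith
  have h := one_sub_inv_le_log_of_pos hpos
  rw [one_div, log_inv]
  have : (1 - t)⁻¹ ≤ 2 := by
    rw [inv_le_comm₀ hpos two_pos]; linarith
  have : (1 - t)⁻¹ - 1 = t * (1 - t)⁻¹ := by field_simp; ring
  nlinarith

lemma setIntegral_Ioi_one_sub_exp_neg_rpow_le {α A c : ℝ} (hα : 1 < α) (hA : 0 ≤ A)
    (hc : 0 < c) :
    ∫ x in Set.Ioi c, (1 - exp (-(A * x ^ (-α)))) ≤ A / (α - 1) * c ^ (1 - α) := by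
  have hnonneg : ∀ x ∈ Set.Ioi c, 0 ≤ A * x ^ (-α) := fun x hx =>
    mul_nonneg hA (rpow_nonneg (hc.trans hx).le _)
  calc ∫ x in Set.Ioi c, (1 - exp (-(A * x ^ (-α))))
      ≤ ∫ x in Set.Ioi c, A * x ^ (-α) :=
        setIntegral_mono_of_nonneg
          (fun x hx => sub_nonneg.2 (exp_le_one_iff.2 (neg_nonpos.2 (hnonneg x hx))))
          (fun x _ => one_sub_exp_neg_le_self _)
          ((integrableOn_Ioi_rpow_of_lt (by linarith) hc).const_mul A)
    _ = A / (α - 1) * c ^ (1 - α) := by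
        rw [integral_const_mul, integral_Ioi_rpow_of_lt (by linarith) hc,
          show -α + 1 = -(α - 1) by ring, show 1 - α = -(α - 1) by ring]
        field_simp

lemma mul_div_rpow_one_div_rpow_one_sub {α A L : ℝ} (hα : α ≠ 0) (hA : 0 < A) (hL : 0 < L) :
    A * ((A / L) ^ (1 / α)) ^ (1 - α) = A ^ (1 / α) * L ^ (1 - 1 / α) := by
  rw [← rpow_mul (div_pos hA hL).le, div_rpow hA.le hL.le,
    show 1 / α * (1 - α) = 1 / α - 1 by field_simp, rpow_sub hA, rpow_sub hL, rpow_sub hL 1,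
    rpow_one, rpow_one]
  field_simp

lemma mul_rpow_le_mul_rpow_of_one_le {c x p : ℝ} (hc : 1 ≤ c) (hx : 0 ≤ x) (hp1 : p ≤ 1) :
    (c * x) ^ p ≤ c * x ^ p := by
  rw [mul_rpow (by linarith) hx]
  gcongr
  simpa using rpow_le_rpow_of_exponent_le hc hp1

theorem frechet_tail_integral_bound
    (α A δ : ℝ) (hα : 1 < α) (hA : 0 < A) (hδ : δ ∈ Set.Ioc (0 : ℝ) (1 / 4)) :
    ∫ x in Set.Ioi ((A / Real.log (1 / (1 - 2 * δ))) ^ (1 / α)),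
        (1 - Real.exp (-(A * x ^ (-α)))) ≤
      8 / (α - 1) * A ^ (1 / α) * δ ^ (1 - 1 / α) := by
  obtain ⟨hδ0, hδ4⟩ := hδ
  set L := log (1 / (1 - 2 * δ))
  have hL0 : 0 < L := log_pos ((one_lt_div (by linarith)).2 (by linarith))
  have hL : L ≤ 4 * δ := by
    linarith [log_one_div_one_sub_le_two_mul (t := 2 * δ) (by linarith) (by linarith)]
  have hp0 : 0 ≤ 1 - 1 / α := sub_nonneg.2 ((div_le_one (by linarith)).2 hα.le)
  have hp1 : 1 - 1 / α ≤ 1 := sub_le_self _ (by positivity)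
  calc _ ≤ A / (α - 1) * ((A / L) ^ (1 / α)) ^ (1 - α) :=
        setIntegral_Ioi_one_sub_exp_neg_rpow_le hα hA.le (by positivity)
    _ = A ^ (1 / α) * L ^ (1 - 1 / α) / (α - 1) := by
        rw [← mul_div_rpow_one_div_rpow_one_sub (by linarith) hA hL0]; ring
    _ ≤ A ^ (1 / α) * (4 * δ ^ (1 - 1 / α)) / (α - 1) := by
        gcongr
        exact (rpow_le_rpow hL0.le hL hp0).trans
          (mul_rpow_le_mul_rpow_of_one_le (by norm_num) hδ0.le hp1)
    _ = 4 / (α - 1) * A ^ (1 / α) * δ ^ (1 - 1 / α) := by ring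
    _ ≤ 8 / (α - 1) * A ^ (1 / α) * δ ^ (1 - 1 / α) := by gcongr; norm_num
end
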